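/- arXiv:1111.1010 — 4 statements merged into one kernel-verified Lean document; each statement's English description precedes it below -/
import Mathlib

section
/- Let X be a contractible topological space and let Y ⊆ X × (0,1]. Suppose R : (X × (0,1]) × [0,1] → X × (0,1] is a continuous deformation retraction of X × (0,1] onto Y (i.e. R(p,0) = p for all p, R(p,1) ∈ Y for all p, and R(y,1) = y for all y ∈ Y) which maps (X × {1}) × [0,1] into X × {1} and whose restriction to X × {1} is a contraction of X × {1} to a point (y,1) (i.e. R((x,1),1) = (y,1) for all x ∈ X). Then for every point y' ∈ X, every contraction C' : X × [0,1] → X of X to y' (i.e. C'(x,0) = x and C'(x,1) = y' for all x ∈ X), and every ε with 0 < ε < 1, there exist a subspace Y' ⊆ X × (0,1] and a continuous deformation retraction R' of X × (0,1] onto Y' such that Y' ∩ (X × (0,ε]) = Y ∩ (X × (0,ε]), R' maps (X × {1}) × [0,1] into X × {1}, and R'((x,1),t) = (C'(x,t),1) for all x ∈ X and t ∈ [0,1]. -/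
/-- The half-open interval (0,1] used as the second factor of the prism X × (0,1]. -/
def ioc01 : Set ℝ := Set.Ioc 0 1

/-- The point 1 ∈ (0,1]. -/
def iocTop : ioc01 := ⟨1, by norm_num [ioc01, Set.mem_Ioc]⟩

/-!
At time `t` the prism `X × (0,1]` is squeezed into `X × (0, cut t]`, fixing `X × (0,ε]`, and `R`
is run on the squeezed copy. The freed collar between height `cut t` and the top is filled by the
points `C' ((R ((x,1), a)).1, b)`, where `(a, b)` runs from `(0, t)` at the top via `(t, t)` to
`(t, 0)` at the cut; so the top face follows `C'` and the collar matches `R` along the cut.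
At `t = 1` the pair `(a, b)` lies on the edges `a = 1` or `b = 1`, where the point is `C' (y₀, b)`
or `y'` whatever `x` is: the collar collapses onto a spine, and `Y'` is the squeezed copy of `Y`
together with this spine.
-/

open Set unitInterval

@[simp] lemma coe_iocTop : (iocTop : ℝ) = 1 := rfl

namespace Prism

variable (ε : Ioo (0 : ℝ) 1)

noncomputable def cut (t : ℝ) : ℝ := 1 - t * (1 - ε) / 2

noncomputable def depth (s : ℝ) : ℝ := 2 * (1 - s) / (1 - ε)

variable {ε}

lemma one_sub_eps_pos : (0 : ℝ) < 1 - ε := sub_pos.2 ε.2.2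

lemma depth_cut (t : ℝ) : depth ε (cut ε t) = t := by
  rw [depth, cut, div_eq_iff one_sub_eps_pos.ne']
  ring

lemma cut_zero : cut ε 0 = 1 := by simp [cut]

lemma cut_le_one {t : ℝ} (ht : 0 ≤ t) : cut ε t ≤ 1 := by
  rw [cut]; linarith [mul_nonneg ht (one_sub_eps_pos (ε := ε)).le]

lemma eps_lt_cut_one : (ε : ℝ) < cut ε 1 := by
  have := ε.2.2
  rw [cut]; linarith

variable (ε)

/-- Pushes `(0,1]` down onto `(0, cut t]`, fixing `(0,ε]`. -/
noncomputable def squeeze (t : I) (r : ioc01) : ioc01 :=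
  ⟨min (r : ℝ) (r - t * (r - ε) / 2),
    lt_min r.2.1 (by
      nlinarith [mul_pos r.2.1 (sub_pos.2 (t.2.2.trans_lt one_lt_two)), mul_nonneg t.2.1 ε.2.1.le]),
    (min_le_left _ _).trans r.2.2⟩

noncomputable def unsqueeze (t : I) (s : ioc01) : ioc01 :=
  ⟨min 1 (max (s : ℝ) ((2 * s - t * ε) / (2 - t))),
    lt_min one_pos (lt_max_of_lt_left s.2.1), min_le_left _ _⟩

variable {ε}

lemma coe_squeeze (t : I) (r : ioc01) :
    (squeeze ε t r : ℝ) = min (r : ℝ) (r - t * (r - ε) / 2) := rfl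

lemma coe_unsqueeze (t : I) (s : ioc01) :
    (unsqueeze ε t s : ℝ) = min 1 (max (s : ℝ) ((2 * s - t * ε) / (2 - t))) := rfl

lemma squeeze_zero (r : ioc01) : squeeze ε 0 r = r :=
  Subtype.ext <| by simp [coe_squeeze]

lemma squeeze_of_le {t : I} {r : ioc01} (hr : (r : ℝ) ≤ ε) : squeeze ε t r = r :=
  Subtype.ext <| min_eq_left <| by nlinarith [t.2.1]

lemma le_of_squeeze_le {t : I} {r : ioc01} (h : (squeeze ε t r : ℝ) ≤ ε) : (r : ℝ) ≤ ε := by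
  by_contra! hr
  refine h.not_gt (lt_min hr ?_)
  nlinarith [t.2.2]

lemma coe_squeeze_top (t : I) : (squeeze ε t iocTop : ℝ) = cut ε t := by
  rw [coe_squeeze, coe_iocTop, cut, min_eq_right]
  nlinarith [t.2.1, ε.2.2]

lemma coe_squeeze_le_cut (t : I) (r : ioc01) : (squeeze ε t r : ℝ) ≤ cut ε t :=
  (min_le_right _ _).trans <| by
    rw [cut]; nlinarith [mul_nonneg (sub_nonneg.2 r.2.2) (by linarith [t.2.2] : (0 : ℝ) ≤ 2 - t)]

lemma unsqueeze_zero (s : ioc01) : unsqueeze ε 0 s = s :=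
  Subtype.ext <| by simp [coe_unsqueeze, s.2.2]

lemma unsqueeze_cut {t : I} {s : ioc01} (h : (s : ℝ) = cut ε t) : unsqueeze ε t s = iocTop := by
  have h2 : (0 : ℝ) < 2 - t := by linarith [t.2.2]
  refine Subtype.ext (min_eq_left (le_max_of_le_right ?_))
  rw [le_div_iff₀ h2, h, cut]
  linarith

lemma unsqueeze_squeeze (t : I) (r : ioc01) : unsqueeze ε t (squeeze ε t r) = r := by
  have h2 : (0 : ℝ) < 2 - t := by linarith [t.2.2]
  suffices max (squeeze ε t r : ℝ) ((2 * squeeze ε t r - t * ε) / (2 - t)) = r from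
    Subtype.ext <| by rw [coe_unsqueeze, this, min_eq_right r.2.2]
  rcases le_total (r : ℝ) ε with hr | hr
  · rw [squeeze_of_le hr, max_eq_left]
    rw [div_le_iff₀ h2]; nlinarith [t.2.1]
  · have hs : (squeeze ε t r : ℝ) = r - t * (r - ε) / 2 :=
      min_eq_right (by nlinarith [t.2.1])
    rw [hs, max_eq_right]
    · field_simp; ring
    · rw [le_div_iff₀ h2]; nlinarith [mul_nonneg t.2.1 (mul_nonneg (sub_nonneg.2 hr) h2.le)]

section Continuity

variable {Z : Type*} [TopologicalSpace Z] {f : Z → I} {g : Z → ioc01}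

@[fun_prop]
lemma continuous_squeeze (hf : Continuous f) (hg : Continuous g) :
    Continuous fun z => squeeze ε (f z) (g z) :=
  Continuous.subtype_mk (by fun_prop) _

@[fun_prop]
lemma continuous_unsqueeze (hf : Continuous f) (hg : Continuous g) :
    Continuous fun z => unsqueeze ε (f z) (g z) := by
  refine Continuous.subtype_mk ?_ _
  have h2 : ∀ z, (2 : ℝ) - f z ≠ 0 := fun z => by linarith [(f z).2.2]
  fun_prop (disch := exact h2)

@[fun_prop]
lemma continuous_depth : Continuous (depth ε) := by
  unfold depth; fun_prop

end Continuity

variable (ε)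

noncomputable def retractTime (s : ioc01) (t : I) : I :=
  projIcc 0 1 zero_le_one (min t (2 * depth ε s))

noncomputable def contractTime (s : ioc01) (t : I) : I :=
  projIcc 0 1 zero_le_one (min t (2 * (t - depth ε s)))

variable {ε}

lemma depth_one : depth ε 1 = 0 := by simp [depth]

lemma retractTime_top (t : I) : retractTime ε iocTop t = 0 := by
  rw [retractTime, coe_iocTop, depth_one, mul_zero, min_eq_right t.2.1]
  exact projIcc_left _

lemma contractTime_top (t : I) : contractTime ε iocTop t = t := by
  rw [contractTime, coe_iocTop, depth_one, sub_zero, min_eq_left (by linarith [t.2.1])]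
  exact projIcc_val _ t

lemma retractTime_cut {s : ioc01} {t : I} (h : (s : ℝ) = cut ε t) : retractTime ε s t = t := by
  rw [retractTime, h, depth_cut, min_eq_left (by linarith [t.2.1])]
  exact projIcc_val _ t

lemma contractTime_cut {s : ioc01} {t : I} (h : (s : ℝ) = cut ε t) : contractTime ε s t = 0 := by
  rw [contractTime, h, depth_cut, sub_self, mul_zero, min_eq_right t.2.1]
  exact projIcc_left _

lemma retractTime_one {s : ioc01} (h : 1 / 2 ≤ depth ε s) : retractTime ε s 1 = 1 := by
  rw [retractTime, Icc.coe_one, min_eq_left (by linarith)]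
  exact projIcc_right _

lemma contractTime_one {s : ioc01} (h : depth ε s ≤ 1 / 2) : contractTime ε s 1 = 1 := by
  rw [contractTime, Icc.coe_one, min_eq_left (by linarith)]
  exact projIcc_right _

section Deformation

variable {X : Type*} (ε) (R : (X × ioc01) × I → X × ioc01)
  (C' : X × I → X)

noncomputable def lower (q : (X × ioc01) × I) : X × ioc01 :=
  Prod.map id (squeeze ε q.2) (R ((q.1.1, unsqueeze ε q.2 q.1.2), q.2))

noncomputable def upper (q : (X × ioc01) × I) : X × ioc01 :=
  (C' ((R ((q.1.1, iocTop), retractTime ε q.1.2 q.2)).1, contractTime ε q.1.2 q.2), q.1.2)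

noncomputable def deformation (q : (X × ioc01) × I) : X × ioc01 :=
  if (q.1.2 : ℝ) ≤ cut ε q.2 then lower ε R q else upper ε R C' q

def spine (y₀ : X) : Set (X × ioc01) :=
  {p | cut ε 1 ≤ p.2 ∧ p.1 = C' (y₀, contractTime ε p.2 1)}

noncomputable def core (Y : Set (X × ioc01)) (y₀ : X) : Set (X × ioc01) :=
  Prod.map id (squeeze ε 1) '' Y ∪ spine ε C' y₀

variable {ε R C'}

lemma lower_eq_upper (hRtop : ∀ x t, (R ((x, iocTop), t)).2 = iocTop)
    (hC'0 : ∀ x, C' (x, 0) = x) {q : (X × ioc01) × I} (h : (q.1.2 : ℝ) = cut ε q.2) :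
    lower ε R q = upper ε R C' q := by
  obtain ⟨⟨x, s⟩, t⟩ := q
  simp only [lower, upper, unsqueeze_cut h, retractTime_cut h, contractTime_cut h, hC'0]
  refine Prod.ext rfl (Subtype.ext ?_)
  rw [Prod.map_snd, hRtop, coe_squeeze_top, ← h]

lemma deformation_of_le_cut {q : (X × ioc01) × I} (h : (q.1.2 : ℝ) ≤ cut ε q.2) :
    deformation ε R C' q = lower ε R q :=
  if_pos h

lemma deformation_of_cut_le (hRtop : ∀ x t, (R ((x, iocTop), t)).2 = iocTop)
    (hC'0 : ∀ x, C' (x, 0) = x) {q : (X × ioc01) × I} (h : cut ε q.2 ≤ q.1.2) :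
    deformation ε R C' q = upper ε R C' q := by
  rcases h.eq_or_lt with h | h
  · rw [deformation_of_le_cut h.ge, lower_eq_upper hRtop hC'0 h.symm]
  · exact if_neg h.not_ge

lemma continuous_deformation [TopologicalSpace X] (hR : Continuous R) (hC' : Continuous C')
    (hRtop : ∀ x t, (R ((x, iocTop), t)).2 = iocTop) (hC'0 : ∀ x, C' (x, 0) = x) :
    Continuous (deformation ε R C') := by
  have hlower : Continuous (lower ε R) := by unfold lower Prod.map; fun_prop
  have hupper : Continuous (upper ε R C') := by
    unfold upper retractTime contractTime
    fun_prop
  exact hlower.if_le hupper (by fun_prop) (by unfold cut; fun_prop)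
    fun q h => lower_eq_upper hRtop hC'0 h

lemma deformation_zero (hR0 : ∀ p, R (p, 0) = p) (p : X × ioc01) :
    deformation ε R C' (p, 0) = p := by
  rw [deformation_of_le_cut (by rw [Icc.coe_zero, cut_zero]; exact p.2.2.2), lower]
  simp only [unsqueeze_zero, hR0, Prod.map, squeeze_zero, id]

lemma deformation_top (hR0 : ∀ p, R (p, 0) = p) (hRtop : ∀ x t, (R ((x, iocTop), t)).2 = iocTop)
    (hC'0 : ∀ x, C' (x, 0) = x) (x : X) (t : I) :
    deformation ε R C' ((x, iocTop), t) = (C' (x, t), iocTop) := by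
  rw [deformation_of_cut_le hRtop hC'0 (by rw [coe_iocTop]; exact cut_le_one t.2.1), upper]
  simp only [retractTime_top, hR0, contractTime_top]

lemma upper_one {y₀ y' : X} (hRcontr : ∀ x, R ((x, iocTop), 1) = (y₀, iocTop))
    (hC'1 : ∀ x, C' (x, 1) = y') (p : X × ioc01) :
    upper ε R C' (p, 1) = (C' (y₀, contractTime ε p.2 1), p.2) := by
  refine Prod.ext ?_ rfl
  rcases le_total (depth ε p.2) (1 / 2) with h | h
  · simp only [upper, contractTime_one h, hC'1]
  · simp only [upper, retractTime_one h, hRcontr]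

lemma deformation_one_mem_core {Y : Set (X × ioc01)} {y₀ y' : X} (hR1 : ∀ p, R (p, 1) ∈ Y)
    (hRtop : ∀ x t, (R ((x, iocTop), t)).2 = iocTop)
    (hRcontr : ∀ x, R ((x, iocTop), 1) = (y₀, iocTop))
    (hC'0 : ∀ x, C' (x, 0) = x) (hC'1 : ∀ x, C' (x, 1) = y') (p : X × ioc01) :
    deformation ε R C' (p, 1) ∈ core ε C' Y y₀ := by
  rcases le_total (p.2 : ℝ) (cut ε 1) with h | h
  · rw [deformation_of_le_cut h]
    exact Or.inl ⟨_, hR1 _, rfl⟩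
  · rw [deformation_of_cut_le hRtop hC'0 h, upper_one hRcontr hC'1]
    exact Or.inr ⟨h, rfl⟩

lemma deformation_one_of_mem_core {Y : Set (X × ioc01)} {y₀ y' : X}
    (hRY : ∀ y ∈ Y, R (y, 1) = y) (hRtop : ∀ x t, (R ((x, iocTop), t)).2 = iocTop)
    (hRcontr : ∀ x, R ((x, iocTop), 1) = (y₀, iocTop))
    (hC'0 : ∀ x, C' (x, 0) = x) (hC'1 : ∀ x, C' (x, 1) = y') {p : X × ioc01}
    (hp : p ∈ core ε C' Y y₀) : deformation ε R C' (p, 1) = p := by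
  rcases hp with ⟨y, hy, rfl⟩ | ⟨hcut, hspine⟩
  · rw [deformation_of_le_cut (coe_squeeze_le_cut 1 y.2), lower]
    simp only [Prod.map, id, unsqueeze_squeeze, hRY y hy]
  · rw [deformation_of_cut_le hRtop hC'0 hcut, upper_one hRcontr hC'1, ← hspine]

lemma core_inter_le_eps (Y : Set (X × ioc01)) (y₀ : X) :
    {p ∈ core ε C' Y y₀ | (p.2 : ℝ) ≤ ε} = {p ∈ Y | (p.2 : ℝ) ≤ ε} := by
  ext p
  constructor
  · rintro ⟨⟨y, hy, rfl⟩ | ⟨hcut, -⟩, hp⟩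
    · have hy2 : (y.2 : ℝ) ≤ ε := le_of_squeeze_le hp
      simp only [Prod.map, id, squeeze_of_le hy2] at hp ⊢
      exact ⟨hy, hp⟩
    · exact (eps_lt_cut_one.trans_le (hcut.trans hp)).false.elim
  · rintro ⟨hy, hp⟩
    refine ⟨Or.inl ⟨p, hy, ?_⟩, hp⟩
    simp only [Prod.map, id, squeeze_of_le hp]

end Deformation

end Prism

theorem stmt0_general (X : Type*) [TopologicalSpace X]
    (Y : Set (X × ioc01)) (y₀ : X)
    (R : (X × ioc01) × unitInterval → X × ioc01)
    (hRcont : Continuous R)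
    (hR0 : ∀ p, R (p, 0) = p)
    (hR1 : ∀ p, R (p, 1) ∈ Y)
    (hRY : ∀ y ∈ Y, R (y, 1) = y)
    (hRtop : ∀ (x : X) (t : unitInterval), (R ((x, iocTop), t)).2 = iocTop)
    (hRcontr : ∀ x : X, R ((x, iocTop), 1) = (y₀, iocTop)) :
    ∀ (y' : X) (C' : X × unitInterval → X), Continuous C' →
      (∀ x, C' (x, 0) = x) → (∀ x, C' (x, 1) = y') →
      ∀ ε : ℝ, 0 < ε → ε < 1 →
      ∃ (Y' : Set (X × ioc01)) (R' : (X × ioc01) × unitInterval → X × ioc01),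
        Continuous R' ∧
        (∀ p, R' (p, 0) = p) ∧
        (∀ p, R' (p, 1) ∈ Y') ∧
        (∀ y ∈ Y', R' (y, 1) = y) ∧
        {p ∈ Y' | (p.2 : ℝ) ≤ ε} = {p ∈ Y | (p.2 : ℝ) ≤ ε} ∧
        (∀ (x : X) (t : unitInterval), (R' ((x, iocTop), t)).2 = iocTop) ∧
        (∀ (x : X) (t : unitInterval), R' ((x, iocTop), t) = (C' (x, t), iocTop)) := by
  intro y' C' hC' hC'0 hC'1 ε hε0 hε1
  let e : Ioo (0 : ℝ) 1 := ⟨ε, hε0, hε1⟩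
  have htop := Prism.deformation_top (ε := e) (C' := C') hR0 hRtop hC'0
  exact ⟨Prism.core e C' Y y₀, Prism.deformation e R C',
    Prism.continuous_deformation hRcont hC' hRtop hC'0,
    Prism.deformation_zero hR0,
    Prism.deformation_one_mem_core hR1 hRtop hRcontr hC'0 hC'1,
    fun _ => Prism.deformation_one_of_mem_core hRY hRtop hRcontr hC'0 hC'1,
    Prism.core_inter_le_eps Y y₀,
    fun x t => congrArg Prod.snd (htop x t), htop⟩

/-- Lemma 3.2: a deformation retraction `R` of `X × (0,1]` onto `Y` which preserves the
top face `X × {1}` and contracts it to a point `(y₀,1)` can be modified, away from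
`X × (0,ε]`, so as to restrict on the top face to any prescribed contraction `C'` of `X`
to any prescribed point `y'`. -/
theorem stmt0 (X : Type*) [TopologicalSpace X] [ContractibleSpace X]
    (Y : Set (X × ioc01)) (y₀ : X)
    (R : (X × ioc01) × unitInterval → X × ioc01)
    (hRcont : Continuous R)
    (hR0 : ∀ p, R (p, 0) = p)
    (hR1 : ∀ p, R (p, 1) ∈ Y)
    (hRY : ∀ y ∈ Y, R (y, 1) = y)
    (hRtop : ∀ (x : X) (t : unitInterval), (R ((x, iocTop), t)).2 = iocTop)
    (hRcontr : ∀ x : X, R ((x, iocTop), 1) = (y₀, iocTop)) :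
    ∀ (y' : X) (C' : X × unitInterval → X), Continuous C' →
      (∀ x, C' (x, 0) = x) → (∀ x, C' (x, 1) = y') →
      ∀ ε : ℝ, 0 < ε → ε < 1 →
      ∃ (Y' : Set (X × ioc01)) (R' : (X × ioc01) × unitInterval → X × ioc01),
        Continuous R' ∧
        (∀ p, R' (p, 0) = p) ∧
        (∀ p, R' (p, 1) ∈ Y') ∧
        (∀ y ∈ Y', R' (y, 1) = y) ∧
        {p ∈ Y' | (p.2 : ℝ) ≤ ε} = {p ∈ Y | (p.2 : ℝ) ≤ ε} ∧
        (∀ (x : X) (t : unitInterval), (R' ((x, iocTop), t)).2 = iocTop) ∧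
        (∀ (x : X) (t : unitInterval), R' ((x, iocTop), t) = (C' (x, t), iocTop)) :=
  stmt0_general X Y y₀ R hRcont hR0 hR1 hRY hRtop hRcontr
end

section
/- Let Q be a finite connected quiver whose underlying undirected graph is a tree. Then there exists a function g : ℤ × Q₀ → ℤ such that (i) g(m,i) = g(m−1,i) + 2 for all m ∈ ℤ and i ∈ Q₀, and (ii) g is strictly increasing along every arrow of the translation quiver ℤQ, i.e. for every arrow i → j of Q and every m ∈ ℤ one has g(m,i) < g(m,j) and g(m−1,j) < g(m,i). Moreover g is unique up to an additive constant: if g and g' both satisfy (i) and (ii), then g − g' is a constant function. -/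
/-!
Along an arrow `i → j` of `Q` the two inequalities `g(m,i) < g(m,j)` and
`g(m,j) - 2 = g(m-1,j) < g(m,i)` force `g(m,j) = g(m,i) + 1`. So position functions are exactly
the functions `g(m,i) = 2m + f(i)` with `f(j) = f(i) + 1` along every arrow. Such an `f` is the
signed number of arrows on the unique path from a fixed root, which is where the tree hypothesis
enters; it is unique up to a constant because the underlying graph is connected.
-/

def underlyingGraph {V : Type*} (A : V → V → Prop) : SimpleGraph V where
  Adj i j := i ≠ j ∧ (A i j ∨ A j i)
  symm := ⟨fun i j h => ⟨h.1.symm, h.2.symm⟩⟩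
  loopless := ⟨fun i h => h.1 rfl⟩

/-- A position function on the translation quiver `ℤQ` (vertex set `ℤ × Q₀`): it increases
by `2` under the inverse translation, and is strictly increasing along every arrow of `ℤQ`,
i.e. for each arrow `i → j` of `Q` and each `m ∈ ℤ`, along `a_m : (m,i) → (m,j)` and
`b_m : (m-1,j) → (m,i)`. -/
def IsPositionFunction {V : Type*} (A : V → V → Prop) (g : ℤ × V → ℤ) : Prop :=
  (∀ (m : ℤ) (i : V), g (m, i) = g (m - 1, i) + 2) ∧
  (∀ i j, A i j → ∀ m : ℤ, g (m, i) < g (m, j) ∧ g (m - 1, j) < g (m, i))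

namespace SimpleGraph

variable {V α : Type*} {G : SimpleGraph V}

lemma Reachable.eq_of_forall_adj {f : V → α} (hf : ∀ u v, G.Adj u v → f u = f v) {u v : V}
    (h : G.Reachable u v) : f u = f v := by
  obtain ⟨p⟩ := h
  induction p with
  | nil => rfl
  | cons hadj _ ih => exact (hf _ _ hadj).trans ih

variable [AddCommGroup α]

def Walk.sumWeight (w : V → V → α) {u v : V} (p : G.Walk u v) : α :=
  (p.darts.map fun d => w d.fst d.snd).sum

@[simp]
lemma Walk.sumWeight_concat (w : V → V → α) {u v x : V} (p : G.Walk u v) (h : G.Adj v x) :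
    (p.concat h).sumWeight w = p.sumWeight w + w v x := by
  simp [sumWeight, darts_concat]

theorem IsTree.exists_potential (hG : G.IsTree) (w : V → V → α)
    (hw : ∀ u v, G.Adj u v → w v u = -w u v) :
    ∃ f : V → α, ∀ u v, G.Adj u v → f v = f u + w u v := by
  obtain ⟨r⟩ := hG.connected.nonempty
  choose P hP using fun v => (hG.connected r v).exists_isPath
  refine ⟨fun v => (P v).sumWeight w, fun u v huv => ?_⟩
  show (P v).sumWeight w = (P u).sumWeight w + w u v
  -- For adjacent `u`, `v`, one of the paths from the root is the other extended by the edge.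
  by_cases hu : u ∈ (P v).support
  · rw [hG.isAcyclic.path_concat (hP u) (hP v) huv hu, Walk.sumWeight_concat]
  · have hv := hG.isAcyclic.mem_support_of_ne_mem_support_of_adj_of_isPath (hP u) (hP v) huv hu
    rw [hG.isAcyclic.path_concat (hP v) (hP u) huv.symm hv, Walk.sumWeight_concat, hw u v huv]
    abel

end SimpleGraph

section PositionFunction

variable {V : Type*} {A : V → V → Prop}

lemma isPositionFunction_iff {g : ℤ × V → ℤ} :
    IsPositionFunction A g ↔ (∀ (m : ℤ) (i : V), g (m, i) = g (m - 1, i) + 2) ∧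
      ∀ i j, A i j → ∀ m : ℤ, g (m, j) = g (m, i) + 1 := by
  refine and_congr_right fun htransl => forall₄_congr fun i j _ m => ?_
  have := htransl m j
  omega

lemma exists_add_one_of_arrow (hnoloop : ∀ i, ¬ A i i) (hno2cycle : ∀ i j, A i j → ¬ A j i)
    (htree : (underlyingGraph A).IsTree) :
    ∃ f : V → ℤ, ∀ i j, A i j → f j = f i + 1 := by
  classical
  obtain ⟨f, hf⟩ := htree.exists_potential (fun i j => if A i j then (1 : ℤ) else -1) <| by
    rintro i j ⟨-, hij | hji⟩
    · simp [hij, hno2cycle i j hij]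
    · simp [hji, hno2cycle j i hji]
  refine ⟨f, fun i j hij => ?_⟩
  simpa [hij] using hf i j ⟨fun h => hnoloop i (h ▸ hij), Or.inl hij⟩

lemma isPositionFunction_two_mul_add {f : V → ℤ} (hf : ∀ i j, A i j → f j = f i + 1) :
    IsPositionFunction A fun p => 2 * p.1 + f p.2 :=
  isPositionFunction_iff.2 ⟨fun m i => by ring, fun i j hij m => by simp only [hf i j hij]; ring⟩

lemma IsPositionFunction.exists_eq_add_const (hconn : (underlyingGraph A).Connected)
    {g g' : ℤ × V → ℤ} (hg : IsPositionFunction A g) (hg' : IsPositionFunction A g') :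
    ∃ c : ℤ, ∀ p : ℤ × V, g p = g' p + c := by
  rw [isPositionFunction_iff] at hg hg'
  have hperiodic : ∀ i, Function.Periodic (fun m => g (m, i) - g' (m, i)) 1 := fun i m => by
    have := hg.1 (m + 1) i
    have := hg'.1 (m + 1) i
    simp only [add_sub_cancel_right] at *
    omega
  have hadj : ∀ i j, (underlyingGraph A).Adj i j → g (0, i) - g' (0, i) = g (0, j) - g' (0, j) := by
    rintro i j ⟨-, hij | hji⟩
    · have := hg.2 i j hij 0
      have := hg'.2 i j hij 0
      omega
    · have := hg.2 j i hji 0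
      have := hg'.2 j i hji 0
      omega
  obtain ⟨r⟩ := hconn.nonempty
  refine ⟨g (0, r) - g' (0, r), fun ⟨m, i⟩ => ?_⟩
  have hm : g (m, i) - g' (m, i) = g (0, i) - g' (0, i) := by
    simpa using (hperiodic i).int_mul m 0
  have hi := (hconn r i).eq_of_forall_adj hadj
  omega

end PositionFunction

theorem stmt3_general {V : Type*} (A : V → V → Prop)
    (hnoloop : ∀ i, ¬ A i i)
    (hno2cycle : ∀ i j, A i j → ¬ A j i)
    (htree : (underlyingGraph A).IsTree) :
    (∃ g : ℤ × V → ℤ, IsPositionFunction A g) ∧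
    (∀ g g' : ℤ × V → ℤ, IsPositionFunction A g → IsPositionFunction A g' →
      ∃ cst : ℤ, ∀ p : ℤ × V, g p = g' p + cst) := by
  obtain ⟨f, hf⟩ := exists_add_one_of_arrow hnoloop hno2cycle htree
  exact ⟨⟨_, isPositionFunction_two_mul_add hf⟩,
    fun _ _ hg hg' => hg.exists_eq_add_const htree.connected hg'⟩

/-- Definition/Lemma 2.8: for a finite connected quiver whose underlying graph is a tree,
a position function on `ℤQ` exists and is unique up to an additive constant. -/
theorem stmt3 {V : Type*} [Fintype V] (A : V → V → Prop)
    (hnoloop : ∀ i, ¬ A i i)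
    (hno2cycle : ∀ i j, A i j → ¬ A j i)
    (htree : (underlyingGraph A).IsTree) :
    (∃ g : ℤ × V → ℤ, IsPositionFunction A g) ∧
    (∀ g g' : ℤ × V → ℤ, IsPositionFunction A g → IsPositionFunction A g' →
      ∃ cst : ℤ, ∀ p : ℤ × V, g p = g' p + cst) :=
  stmt3_general A hnoloop hno2cycle htree
end

section
/- Let H = { m·e^{iπφ} ∈ ℂ : m ∈ ℝ_{>0}, 0 ≤ φ < 1 } (the open upper half-plane together with the positive real axis), and for z ∈ H let μ(z) ∈ [0,1) denote the unique φ with z = |z|·e^{iπφ}. Then there do not exist complex numbers z₁, z₂, z₃, z₄ ∈ H such that, setting P₁ = z₁, P₂ = z₁+z₂, P₃ = z₁+z₃, P₄ = z₁+z₄, M₂ = z₁+z₃+z₄, M₃ = z₁+z₂+z₄, M₄ = z₁+z₂+z₃, I₁ = z₁+z₂+z₃+z₄ and M₁ = I₁+z₁ (all of which automatically lie in H), the phases satisfy the strict chain of inequalities μ(z₂) > μ(z₃) > μ(z₄) > μ(I₁) > μ(M₃) > μ(M₄) > μ(M₂) > μ(M₁) > μ(P₂) > μ(P₃) > μ(P₄)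 > μ(P₁). -/
/-!
For `y, z ∈ H`, `μ(y) < μ(z)` forces the cross product `ω(y, z) = Im(ȳ z)` to be positive.
Along the given chain, `μ(z₁) < μ(z₃)`, `μ(P₂) < μ(z₃)`, `μ(z₄) < μ(z₃)`, `μ(P₃) < μ(P₂)`,
`μ(P₄) < μ(P₃)` and `μ(M₄) < μ(M₃)` thus give six positive cross products. But the Plücker
relation `ω₁₂ω₃₄ - ω₁₃ω₂₄ + ω₁₄ω₂₃ = 0` among the `ωᵢⱼ = ω(zᵢ, zⱼ)` makes a sum of four
products of them vanish identically.
-/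

open Complex

/-- The upper half-plane together with the positive real axis:
`H = { m e^{iπφ} : m > 0, 0 ≤ φ < 1 }`. -/
def Hset : Set ℂ :=
  {z | ∃ m : ℝ, 0 < m ∧ ∃ φ : ℝ, 0 ≤ φ ∧ φ < 1 ∧
    z = (m : ℂ) * Complex.exp ((φ : ℂ) * (Real.pi : ℂ) * Complex.I)}

/-- The phase `μ(z) ∈ [0,1)` of `z ∈ H`, i.e. the unique `φ` with `z = |z| e^{iπφ}`;
for `z ∈ H` it equals `arg z / π`. -/
noncomputable def phaseH (z : ℂ) : ℝ := Complex.arg z / Real.pi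

/-- `Im(ȳ z)`, positive iff `z` lies strictly counterclockwise from `y` within a half-turn. -/
def cross (y z : ℂ) : ℝ := y.re * z.im - y.im * z.re

/-- The set `H` in coordinates, where it is visibly closed under addition. -/
def semiclosedUpperHalfPlane : AddSubsemigroup ℂ where
  carrier := {z | 0 < z.im ∨ (z.im = 0 ∧ 0 < z.re)}
  add_mem' := by
    rintro y z (hy | ⟨hy, hy'⟩) (hz | ⟨hz, hz'⟩) <;> change 0 < _ ∨ (_ = 0 ∧ 0 < _) <;>
      simp only [add_im, add_re]
    · left; linarith
    · left; linarith
    · left; linarith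
    · right; constructor <;> linarith

namespace semiclosedUpperHalfPlane

lemma ne_zero {z : ℂ} (hz : z ∈ semiclosedUpperHalfPlane) : z ≠ 0 := by
  rintro rfl
  rcases hz with h | ⟨_, h⟩ <;> simp at h

lemma arg_nonneg {z : ℂ} (hz : z ∈ semiclosedUpperHalfPlane) : 0 ≤ arg z :=
  arg_nonneg_iff.2 (by rcases hz with h | ⟨h, _⟩ <;> linarith)

lemma arg_lt_pi {z : ℂ} (hz : z ∈ semiclosedUpperHalfPlane) : arg z < Real.pi :=
  arg_lt_pi_iff.2 (by rcases hz with h | ⟨_, h⟩ <;> [exact Or.inr h.ne'; exact Or.inl h.le])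

end semiclosedUpperHalfPlane

lemma Hset_subset_semiclosedUpperHalfPlane : Hset ⊆ semiclosedUpperHalfPlane := by
  rintro _ ⟨m, hm, φ, hφ₀, hφ₁, rfl⟩
  have hexp : (φ : ℂ) * (Real.pi : ℂ) * I = ((φ * Real.pi : ℝ) : ℂ) * I := by push_cast; ring
  change 0 < _ ∨ (_ = 0 ∧ 0 < _)
  simp only [hexp, re_ofReal_mul, im_ofReal_mul, exp_ofReal_mul_I_re, exp_ofReal_mul_I_im]
  rcases hφ₀.eq_or_lt with rfl | hφ₀
  · right; simpa using hm
  · left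
    exact mul_pos hm (Real.sin_pos_of_pos_of_lt_pi (by positivity) (by nlinarith [Real.pi_pos]))

lemma cross_eq_norm_mul_norm_mul_sin (y z : ℂ) :
    cross y z = ‖y‖ * ‖z‖ * Real.sin (arg z - arg y) := by
  rw [cross, Real.sin_sub, ← norm_mul_cos_arg y, ← norm_mul_sin_arg y, ← norm_mul_cos_arg z,
    ← norm_mul_sin_arg z]
  ring

lemma cross_pos_of_phaseH_lt {y z : ℂ} (hy : y ∈ semiclosedUpperHalfPlane)
    (hz : z ∈ semiclosedUpperHalfPlane) (h : phaseH y < phaseH z) : 0 < cross y z := by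
  have harg : arg y < arg z := (div_lt_div_iff_of_pos_right Real.pi_pos).1 h
  rw [cross_eq_norm_mul_norm_mul_sin]
  refine mul_pos (mul_pos (norm_pos_iff.2 (semiclosedUpperHalfPlane.ne_zero hy))
    (norm_pos_iff.2 (semiclosedUpperHalfPlane.ne_zero hz))) ?_
  exact Real.sin_pos_of_pos_of_lt_pi (by linarith) (by
    linarith [semiclosedUpperHalfPlane.arg_nonneg hy, semiclosedUpperHalfPlane.arg_lt_pi hz])

lemma plucker_relation_D₄ (z₁ z₂ z₃ z₄ : ℂ) :
    cross (z₁ + z₂) z₃ * cross (z₁ + z₄) (z₁ + z₃)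
      + cross z₁ z₃ * cross (z₁ + z₂ + z₃) (z₁ + z₂ + z₄)
      + cross z₄ z₃ * cross (z₁ + z₃) (z₁ + z₂)
      + cross z₁ z₃ * cross z₄ z₃ = 0 := by
  simp only [cross, add_re, add_im]
  ring

/-- Counterexample 8.15: there is no stability function (given by central charges
`z₁, z₂, z₃, z₄ ∈ H` of the four simples of the `D₄` quiver) inducing the longest
directed path `I₂·I₃·I₄·I₁·M₃·M₄·M₂·M₁·P₂·P₃·P₄·P₁`, i.e. making the phases of the
twelve indecomposables strictly decrease along that order. -/
theorem stmt6 :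
    ¬ ∃ z₁ z₂ z₃ z₄ : ℂ,
      z₁ ∈ Hset ∧ z₂ ∈ Hset ∧ z₃ ∈ Hset ∧ z₄ ∈ Hset ∧
      phaseH z₂ > phaseH z₃ ∧
      phaseH z₃ > phaseH z₄ ∧
      phaseH z₄ > phaseH (z₁ + z₂ + z₃ + z₄) ∧
      phaseH (z₁ + z₂ + z₃ + z₄) > phaseH (z₁ + z₂ + z₄) ∧
      phaseH (z₁ + z₂ + z₄) > phaseH (z₁ + z₂ + z₃) ∧
      phaseH (z₁ + z₂ + z₃) > phaseH (z₁ + z₃ + z₄) ∧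
      phaseH (z₁ + z₃ + z₄) > phaseH (2 * z₁ + z₂ + z₃ + z₄) ∧
      phaseH (2 * z₁ + z₂ + z₃ + z₄) > phaseH (z₁ + z₂) ∧
      phaseH (z₁ + z₂) > phaseH (z₁ + z₃) ∧
      phaseH (z₁ + z₃) > phaseH (z₁ + z₄) ∧
      phaseH (z₁ + z₄) > phaseH z₁ := by
  rintro ⟨z₁, z₂, z₃, z₄, hz₁, hz₂, hz₃, hz₄, -, h₄₃, hI₁, hM₃, hM₄₃, hM₄, hM₂, hM₁,
    hP₃₂, hP₄₃, hP₁⟩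
  have u₁ := Hset_subset_semiclosedUpperHalfPlane hz₁
  have u₂ := Hset_subset_semiclosedUpperHalfPlane hz₂
  have u₃ := Hset_subset_semiclosedUpperHalfPlane hz₃
  have u₄ := Hset_subset_semiclosedUpperHalfPlane hz₄
  have c₁₃ := cross_pos_of_phaseH_lt u₁ u₃ (by linarith)
  have cP₂₃ := cross_pos_of_phaseH_lt (add_mem u₁ u₂) u₃ (by linarith)
  have c₄₃ := cross_pos_of_phaseH_lt u₄ u₃ h₄₃
  have cP₃₂ := cross_pos_of_phaseH_lt (add_mem u₁ u₃) (add_mem u₁ u₂) hP₃₂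
  have cP₄₃ := cross_pos_of_phaseH_lt (add_mem u₁ u₄) (add_mem u₁ u₃) hP₄₃
  have cM₄₃ :=
    cross_pos_of_phaseH_lt (add_mem (add_mem u₁ u₂) u₃) (add_mem (add_mem u₁ u₂) u₄) hM₄₃
  linarith [plucker_relation_D₄ z₁ z₂ z₃ z₄, mul_pos cP₂₃ cP₄₃, mul_pos c₁₃ cM₄₃,
    mul_pos c₄₃ cP₃₂, mul_pos c₁₃ c₄₃]
end

section
/- Let H = { m·e^{iπφ} ∈ ℂ : m ∈ ℝ_{>0}, 0 ≤ φ < 1 }, and for z ∈ H let μ(z) ∈ [0,1) denote the unique φ with z = |z|·e^{iπφ}. For integers a, c, b with 1 ≤ a ≤ c < b, the complex numbers z_{a,c} = Σ_{j=a}^{c} (−j + i) and z_{a,b} = Σ_{j=a}^{b} (−j + i) lie in H and satisfy μ(z_{a,c}) < μ(z_{a,b}). -/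
open Complex

/-! The central charge `z_{a,c}` is `(c - a + 1)` times `-(a + c)/2 + i`, and positive real
factors do not change the argument. Since `arg (x + i) = π/2 - arctan x`, the phase of `z_{a,c}`
is `1/2 + arctan ((a + c)/2) / π`, which is strictly increasing in `c`. -/

open Finset Real

lemma mem_Hset_of_im_pos {z : ℂ} (hz : 0 < z.im) : z ∈ Hset := by
  have hz0 : z ≠ 0 := fun h => by simp [h] at hz
  refine ⟨‖z‖, norm_pos_iff.mpr hz0, arg z / π, ?_, ?_, ?_⟩
  · exact div_nonneg (arg_nonneg_iff.mpr hz.le) pi_pos.le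
  · exact (div_lt_one pi_pos).mpr (arg_lt_pi_iff.mpr (Or.inr hz.ne'))
  · rw [ofReal_div, div_mul_cancel₀ _ (ofReal_ne_zero.mpr pi_ne_zero)]
    exact (norm_mul_exp_arg_mul_I z).symm

lemma arg_ofReal_add_I (x : ℝ) : arg (x + I) = π / 2 - Real.arctan x := by
  have hnorm : ‖(x : ℂ) + I‖ = √(1 + x ^ 2) := by
    simpa [add_comm (x ^ 2)] using norm_add_mul_I x 1
  rw [arg_of_im_pos (by simp), arccos_eq_pi_div_two_sub_arcsin, arctan_eq_arcsin, hnorm]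
  simp

lemma two_mul_sum_Icc_id (a c : ℤ) (h : a ≤ c) :
    2 * ∑ j ∈ Icc a c, j = (c - a + 1) * (a + c) := by
  induction c, h using Int.leInduction with
  | base => rw [Icc_self, sum_singleton]; ring
  | succ n hn ih =>
    rw [← insert_Icc_right_eq_Icc_add_one (by omega), sum_insert (by simp), mul_add, ih]
    ring

lemma sum_Icc_neg_add_I (a c : ℤ) (h : a ≤ c) :
    ∑ j ∈ Icc a c, (-(j : ℂ) + I) = ((c - a + 1 : ℝ) : ℂ) * ((-(a + c) / 2 : ℝ) + I) := by
  have hgauss : 2 * ∑ j ∈ Icc a c, (j : ℂ) = ((c : ℂ) - a + 1) * (a + c) := by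
    simpa using congrArg (Int.cast (R := ℂ)) (two_mul_sum_Icc_id a c h)
  have hcard : ((#(Icc a c) : ℕ) : ℂ) = c - a + 1 := by
    rw [Int.card_Icc]; exact_mod_cast (show ((c + 1 - a).toNat : ℤ) = c - a + 1 by omega)
  rw [sum_add_distrib, sum_neg_distrib, sum_const, nsmul_eq_mul, hcard]
  push_cast
  linear_combination -hgauss / 2

lemma arg_sum_Icc_neg_add_I (a c : ℤ) (h : a ≤ c) :
    arg (∑ j ∈ Icc a c, (-(j : ℂ) + I)) = π / 2 + Real.arctan ((a + c) / 2) := by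
  have hn : (0 : ℝ) < c - a + 1 := by
    have : (a : ℝ) ≤ c := by exact_mod_cast h
    linarith
  rw [sum_Icc_neg_add_I a c h, arg_real_mul _ hn, arg_ofReal_add_I, neg_div, arctan_neg,
    sub_neg_eq_add]

lemma sum_Icc_neg_add_I_mem_Hset (a c : ℤ) (h : a ≤ c) :
    ∑ j ∈ Icc a c, (-(j : ℂ) + I) ∈ Hset :=
  mem_Hset_of_im_pos <| by simpa [im_sum] using h

theorem stmt7_general (a c b : ℤ) (hac : a ≤ c) (hcb : c < b) :
    (∑ j ∈ Finset.Icc a c, (-(j : ℂ) + Complex.I)) ∈ Hset ∧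
    (∑ j ∈ Finset.Icc a b, (-(j : ℂ) + Complex.I)) ∈ Hset ∧
    phaseH (∑ j ∈ Finset.Icc a c, (-(j : ℂ) + Complex.I)) <
      phaseH (∑ j ∈ Finset.Icc a b, (-(j : ℂ) + Complex.I)) := by
  have hab : a ≤ b := hac.trans hcb.le
  refine ⟨sum_Icc_neg_add_I_mem_Hset a c hac, sum_Icc_neg_add_I_mem_Hset a b hab, ?_⟩
  have hcb' : (c : ℝ) < b := by exact_mod_cast hcb
  unfold phaseH
  rw [arg_sum_Icc_neg_add_I a c hac, arg_sum_Icc_neg_add_I a b hab]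
  gcongr

/-- The inequality behind Reineke's totally stable stability function on the `A_n`
quiver `n → n-1 → ⋯ → 1` with `Z(S_j) = -j + i`: for `1 ≤ a ≤ c < b`, the central
charges `z_{a,c} = Σ_{j=a}^{c} (-j + i)` and `z_{a,b} = Σ_{j=a}^{b} (-j + i)` lie in `H`
and `μ(z_{a,c}) < μ(z_{a,b})`. -/
theorem stmt7 (a c b : ℤ) (ha : 1 ≤ a) (hac : a ≤ c) (hcb : c < b) :
    (∑ j ∈ Finset.Icc a c, (-(j : ℂ) + Complex.I)) ∈ Hset ∧
    (∑ j ∈ Finset.Icc a b, (-(j : ℂ) + Complex.I)) ∈ Hset ∧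
    phaseH (∑ j ∈ Finset.Icc a c, (-(j : ℂ) + Complex.I)) <
      phaseH (∑ j ∈ Finset.Icc a b, (-(j : ℂ) + Complex.I)) :=
  stmt7_general a c b hac hcb
end
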